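/- arXiv:1401.1444 — 2 statements merged into one kernel-verified Lean document; each statement's English description precedes it below -/
import Mathlib

section
/- Let r and s be positive integers with r \equiv 0 (mod 3) and s \equiv 0 (mod 6). For a nonnegative integer n, let t be the number of digits equal to 1 in the 3-adic expansion of n. Then: a_n(r,s) \equiv 1 (mod 9) if and only if t \equiv 0 (mod 6); a_n(r,s) \equiv 2 (mod 9) if and only if t \equiv 1 (mod 6); a_n(r,s) \equiv 4 (mod 9) if and only if t \equiv 2 (mod 6); a_n(r,s) \equiv 8 (mod 9) if and only if t \equiv 3 (mod 6); a_n(r,s) \equiv 7 (mod 9) if and only if t \equiv 4 (mod 6); a_n(r,s) \equiv 5 (mod 9) if and only if t \equiv 5 (mod 6); and a_n(r,s) is never \equiv 3 or 6 (mod 9). -/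
open Finset

/-- The generalised Apéry numbers `a_n(r,s) = ∑_{k=0}^n C(n,k)^r C(n+k,k)^s`. -/
def apery (r s n : ℕ) : ℕ :=
  ∑ k ∈ Finset.range (n + 1), n.choose k ^ r * (n + k).choose k ^ s

/-- The number of digits among `d 0, …, d m` equal to `v`. -/
def digitCount (d : ℕ → ℕ) (m v : ℕ) : ℕ :=
  ((Finset.range (m + 1)).filter fun i => d i = v).card

/-- The number of occurrences of the string `ab` in the 3-adic expansion with digits
`d 0, …, d m` (using the convention that digits above position `m` are zero): indices `ν`
with `1 ≤ ν ≤ m + 1`, `d ν = a` and `d (ν - 1) = b`. -/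
def occ (d : ℕ → ℕ) (m a b : ℕ) : ℕ :=
  ((Finset.Icc 1 (m + 1)).filter fun ν => d ν = a ∧ d (ν - 1) = b).card

/-- The 3-adic expansion of `n` (digits `d 0, …, d m`) has exactly one occurrence of the
string `ab`, and all digits not belonging to this occurrence are `0` or `2`. -/
def uniqueOcc (d : ℕ → ℕ) (m a b : ℕ) : Prop :=
  occ d m a b = 1 ∧
  ∀ ν ∈ Finset.Icc 1 (m + 1), (d ν = a ∧ d (ν - 1) = b) →
    ∀ i ≤ m, i ≠ ν → i ≠ ν - 1 → (d i = 0 ∨ d i = 2)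

/-!
By Lucas' theorem, `3 ∤ C(n,k)` and `3 ∤ C(n+k,k)` exactly when, digit by digit, `k_i ≤ n_i` and
`n_i + k_i < 3`: so `k_i = 0` unless `n_i = 1`, where `k_i ∈ {0, 1}`. There are `2^t` such `k`,
and for them `C(n,k) ≡ ∏ C(n_i,k_i) = 1 (mod 3)`. Since `r, s ≥ 2`, all other terms of `a_n(r,s)`
vanish mod 9, while `x ≡ 1 (mod 3)` gives `x^3 ≡ 1 (mod 9)` and Euler (`φ 9 = 6`) gives
`y^6 ≡ 1 (mod 9)` for `3 ∤ y`. Hence `a_n(r,s) ≡ 2^t (mod 9)`, and the powers of `2` mod 9 run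
through `1, 2, 4, 8, 7, 5` with period 6.
-/

theorem Finset.sum_range_mul_eq_sum_sum {M : Type*} [AddCommMonoid M] (f : ℕ → M) (p q : ℕ) :
    ∑ k ∈ range (p * q), f k = ∑ i ∈ range q, ∑ b ∈ range p, f (p * i + b) := by
  induction q with
  | zero => simp
  | succ q ih => rw [Nat.mul_succ, sum_range_add, ih, sum_range_succ]

namespace Nat

theorem count_digits_add_mul {b v : ℕ} (hb : 1 < b) (hv : v ≠ 0) {j : ℕ} (hj : j < b) (q : ℕ) :
    (b.digits (j + b * q)).count v = (b.digits q).count v + if j = v then 1 else 0 := by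
  rcases Nat.eq_zero_or_pos j with rfl | hj0
  · rcases Nat.eq_zero_or_pos q with rfl | hq
    · simp [Ne.symm hv]
    · rw [digits_add b hb 0 q hj (Or.inr hq.ne'), List.count_cons]
      simp [Ne.symm hv]
  · rw [digits_add b hb j q hj (Or.inl hj0.ne'), List.count_cons]
    simp only [beq_iff_eq]

section Lucas

variable {p : ℕ} [hp : Fact p.Prime]

theorem choose_mul_add_modEq {q i j b : ℕ} (hj : j < p) (hb : b < p) :
    (p * q + j).choose (p * i + b) ≡ j.choose b * q.choose i [MOD p] := by
  have h :=
    Choose.choose_modEq_choose_mod_mul_choose_div_nat (n := p * q + j) (k := p * i + b) (p := p)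
  have hp0 : 0 < p := hp.out.pos
  rwa [mul_add_mod, mul_add_mod, mod_eq_of_lt hj, mod_eq_of_lt hb, mul_add_div hp0,
    mul_add_div hp0, div_eq_of_lt hj, div_eq_of_lt hb, add_zero, add_zero] at h

theorem prime_dvd_choose_iff_lt {j b : ℕ} (hj : j < p) : p ∣ j.choose b ↔ j < b := by
  refine ⟨fun h => ?_, fun h => by rw [choose_eq_zero_of_lt h]; exact dvd_zero p⟩
  by_contra hbj
  exact (hp.out.coprime_iff_not_dvd.1 (hp.out.coprime_choose_of_lt hj (not_lt.1 hbj))) h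

theorem prime_dvd_choose_mul_add_iff {q i j b : ℕ} (hj : j < p) (hb : b < p) :
    p ∣ (p * q + j).choose (p * i + b) ↔ p ∣ q.choose i ∨ j < b := by
  rw [(choose_mul_add_modEq hj hb).dvd_iff dvd_rfl, hp.out.dvd_mul, prime_dvd_choose_iff_lt hj,
    or_comm]

theorem prime_dvd_add_choose_mul_add_iff {q i j b : ℕ} (hj : j < p) (hb : b < p) :
    p ∣ (p * q + j + (p * i + b)).choose (p * i + b) ↔ p ∣ (q + i).choose i ∨ p ≤ j + b := by
  rcases lt_or_ge (j + b) p with hc | hc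
  · rw [show p * q + j + (p * i + b) = p * (q + i) + (j + b) by ring,
      prime_dvd_choose_mul_add_iff hc hb]
    omega
  · rw [show p * q + j + (p * i + b) = p * (q + i + 1) + (j + b - p) by
      have : p * (q + i + 1) = p * q + p * i + p := by ring
      omega, prime_dvd_choose_mul_add_iff (by omega) hb]
    omega

end Lucas

end Nat

def chooseCoprimeIndicator (p n k : ℕ) : ℕ :=
  if ¬ p ∣ n.choose k ∧ ¬ p ∣ (n + k).choose k then 1 else 0

section Indicator

open Nat

variable {p : ℕ} [Fact p.Prime]

theorem chooseCoprimeIndicator_mul_add {q i j b : ℕ} (hj : j < p) (hb : b < p) :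
    chooseCoprimeIndicator p (p * q + j) (p * i + b) =
      chooseCoprimeIndicator p q i * if b ≤ j ∧ j + b < p then 1 else 0 := by
  unfold chooseCoprimeIndicator
  simp only [prime_dvd_choose_mul_add_iff hj hb, prime_dvd_add_choose_mul_add_iff hj hb]
  by_cases hq : p ∣ q.choose i <;> by_cases hqi : p ∣ (q + i).choose i <;>
    by_cases hbj : b ≤ j ∧ j + b < p <;> simp [hq, hqi, hbj]

theorem sum_chooseCoprimeIndicator_mul_add {q j : ℕ} (hj : j < p) :
    ∑ k ∈ range (p * q + j + 1), chooseCoprimeIndicator p (p * q + j) k =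
      (min j (p - 1 - j) + 1) * ∑ i ∈ range (q + 1), chooseCoprimeIndicator p q i := by
  have hext : ∑ k ∈ range (p * q + j + 1), chooseCoprimeIndicator p (p * q + j) k =
      ∑ k ∈ range (p * (q + 1)), chooseCoprimeIndicator p (p * q + j) k := by
    refine sum_subset (range_subset_range.2 (by rw [mul_add_one]; omega)) fun k hk hk' => ?_
    rw [mem_range, mul_add_one] at hk
    rw [mem_range, not_lt] at hk'
    obtain ⟨b, rfl⟩ := Nat.exists_eq_add_of_le (show p * q ≤ k by omega)
    rw [chooseCoprimeIndicator_mul_add hj (by omega), if_neg (by omega), mul_zero]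
  have hcount : ∑ b ∈ range p, (if b ≤ j ∧ j + b < p then 1 else 0) = min j (p - 1 - j) + 1 := by
    rw [sum_boole, Nat.cast_id, ← card_range (min j (p - 1 - j) + 1)]
    congr 1
    ext b
    simp only [mem_filter, mem_range]
    omega
  rw [hext, Finset.sum_range_mul_eq_sum_sum, mul_sum]
  refine sum_congr rfl fun i _ => ?_
  rw [← hcount, sum_mul]
  refine sum_congr rfl fun b hb => ?_
  rw [chooseCoprimeIndicator_mul_add hj (mem_range.1 hb), mul_comm]

end Indicator

theorem sum_chooseCoprimeIndicator_three_eq_two_pow (n : ℕ) :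
    ∑ k ∈ range (n + 1), chooseCoprimeIndicator 3 n k = 2 ^ (Nat.digits 3 n).count 1 := by
  induction n using Nat.strong_induction_on with
  | _ n ih =>
    rcases Nat.eq_zero_or_pos n with rfl | hn
    · decide
    · obtain ⟨q, j, hj, rfl⟩ : ∃ q j, j < 3 ∧ n = 3 * q + j :=
        ⟨n / 3, n % 3, n.mod_lt three_pos, (Nat.div_add_mod n 3).symm⟩
      rw [sum_chooseCoprimeIndicator_mul_add hj, ih q (by omega), add_comm (3 * q),
        Nat.count_digits_add_mul (by norm_num) one_ne_zero hj]
      interval_cases j <;> simp [pow_succ, mul_comm]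

theorem choose_modEq_one_three_of_not_dvd {n k : ℕ} (h₁ : ¬ 3 ∣ n.choose k)
    (h₂ : ¬ 3 ∣ (n + k).choose k) : n.choose k ≡ 1 [MOD 3] := by
  induction k using Nat.strong_induction_on generalizing n with
  | _ k ih =>
    rcases Nat.eq_zero_or_pos k with rfl | hk
    · rw [Nat.choose_zero_right]
    obtain ⟨q, j, hj, rfl⟩ : ∃ q j, j < 3 ∧ n = 3 * q + j :=
      ⟨n / 3, n % 3, n.mod_lt three_pos, (Nat.div_add_mod n 3).symm⟩
    obtain ⟨i, b, hb, rfl⟩ : ∃ i b, b < 3 ∧ k = 3 * i + b :=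
      ⟨k / 3, k % 3, k.mod_lt three_pos, (Nat.div_add_mod k 3).symm⟩
    rw [Nat.prime_dvd_choose_mul_add_iff hj hb, not_or] at h₁
    rw [Nat.prime_dvd_add_choose_mul_add_iff hj hb, not_or] at h₂
    have hjb : j.choose b = 1 := by
      interval_cases j <;> interval_cases b <;> simp_all
    have hqi : q.choose i ≡ 1 [MOD 3] := ih i (by omega) h₁.1 h₂.1
    have hl := Nat.choose_mul_add_modEq (p := 3) (q := q) (i := i) hj hb
    rw [hjb, one_mul] at hl
    exact hl.trans hqi

theorem card_filter_range_eq_count_digits {b v : ℕ} (hb : 1 < b) (hv : v ≠ 0) {d : ℕ → ℕ}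
    (hd : ∀ i, d i < b) (m : ℕ) :
    ((range m).filter (d · = v)).card = (b.digits (∑ i ∈ range m, d i * b ^ i)).count v := by
  induction m generalizing d with
  | zero => simp
  | succ m ih =>
    have hsum :
        ∑ i ∈ range (m + 1), d i * b ^ i = d 0 + b * ∑ i ∈ range m, d (i + 1) * b ^ i := by
      rw [sum_range_succ', mul_sum, pow_zero, mul_one, add_comm]
      congr 1
      exact sum_congr rfl fun i _ => by ring
    rw [hsum, Nat.count_digits_add_mul hb hv (hd 0), ← ih fun i => hd (i + 1), card_filter,
      card_filter, sum_range_succ']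

theorem pow_three_modEq_one_nine {x : ℕ} (hx : x ≡ 1 [MOD 3]) : x ^ 3 ≡ 1 [MOD 9] := by
  have h := dvd_sub_pow_of_dvd_sub (Nat.modEq_iff_dvd.1 hx.symm) 1
  refine (Nat.modEq_iff_dvd.2 ?_).symm
  push_cast at h ⊢
  simpa using h

theorem pow_six_modEq_one_nine {x : ℕ} (hx : ¬ 3 ∣ x) : x ^ 6 ≡ 1 [MOD 9] := by
  have hcop : x.Coprime (3 ^ 2) :=
    (((Nat.Prime.coprime_iff_not_dvd Nat.prime_three).2 hx).pow_left 2).symm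
  have h := Nat.ModEq.pow_totient hcop
  rwa [Nat.totient_prime_pow Nat.prime_three two_pos] at h

theorem nine_dvd_pow_of_three_dvd {x r : ℕ} (hx : 3 ∣ x) (hr : 2 ≤ r) : 9 ∣ x ^ r :=
  (pow_dvd_pow 3 hr).trans (pow_dvd_pow_of_dvd hx r)

theorem choose_pow_mul_choose_pow_modEq_indicator {r s : ℕ} (hr₀ : 0 < r) (hr : 3 ∣ r)
    (hs₀ : 0 < s) (hs : 6 ∣ s) (n k : ℕ) :
    n.choose k ^ r * (n + k).choose k ^ s ≡ chooseCoprimeIndicator 3 n k [MOD 9] := by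
  unfold chooseCoprimeIndicator
  split_ifs with h
  · obtain ⟨h₁, h₂⟩ := h
    obtain ⟨a, rfl⟩ := hr
    obtain ⟨c, rfl⟩ := hs
    have hC₁ := (pow_three_modEq_one_nine (choose_modEq_one_three_of_not_dvd h₁ h₂)).pow a
    have hC₂ := (pow_six_modEq_one_nine h₂).pow c
    rw [one_pow, ← pow_mul] at hC₁ hC₂
    simpa using hC₁.mul hC₂
  · refine Nat.modEq_zero_iff_dvd.2 ?_
    rcases not_and_or.1 h with h | h <;> rw [not_not] at h
    · exact dvd_mul_of_dvd_left (nine_dvd_pow_of_three_dvd h (by omega)) _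
    · exact dvd_mul_of_dvd_right (nine_dvd_pow_of_three_dvd h (by omega)) _

theorem apery_modEq_two_pow_count_digits {r s : ℕ} (hr₀ : 0 < r) (hr : 3 ∣ r) (hs₀ : 0 < s)
    (hs : 6 ∣ s) (n : ℕ) : apery r s n ≡ 2 ^ (Nat.digits 3 n).count 1 [MOD 9] := by
  rw [apery, ← sum_chooseCoprimeIndicator_three_eq_two_pow]
  exact Nat.ModEq.sum fun k _ => choose_pow_mul_choose_pow_modEq_indicator hr₀ hr hs₀ hs n k

theorem two_pow_modEq_two_pow_mod_six (t : ℕ) : 2 ^ t ≡ 2 ^ (t % 6) [MOD 9] := by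
  conv_lhs => rw [← Nat.div_add_mod t 6, pow_add, pow_mul]
  simpa using ((show 2 ^ 6 ≡ 1 [MOD 9] by decide).pow (t / 6)).mul_right (2 ^ (t % 6))

theorem apery_mod_nine_r0_s0_general (r s : ℕ) (hr : 0 < r) (hs : 0 < s) (hr3 : r % 3 = 0) (hs6 : s % 6 = 0)
    (n m : ℕ) (d : ℕ → ℕ) (hd2 : ∀ i, d i ≤ 2)
    (hn : n = ∑ i ∈ Finset.range (m + 1), d i * 3 ^ i) :
    (apery r s n ≡ 1 [MOD 9] ↔ digitCount d m 1 % 6 = 0) ∧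
    (apery r s n ≡ 2 [MOD 9] ↔ digitCount d m 1 % 6 = 1) ∧
    (apery r s n ≡ 4 [MOD 9] ↔ digitCount d m 1 % 6 = 2) ∧
    (apery r s n ≡ 8 [MOD 9] ↔ digitCount d m 1 % 6 = 3) ∧
    (apery r s n ≡ 7 [MOD 9] ↔ digitCount d m 1 % 6 = 4) ∧
    (apery r s n ≡ 5 [MOD 9] ↔ digitCount d m 1 % 6 = 5) ∧
    ¬ (apery r s n ≡ 3 [MOD 9]) ∧
    ¬ (apery r s n ≡ 6 [MOD 9]) := by
  have hcount : digitCount d m 1 = (Nat.digits 3 n).count 1 :=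
    hn ▸ card_filter_range_eq_count_digits (by norm_num) one_ne_zero
      (fun i => Nat.lt_succ_of_le (hd2 i)) (m + 1)
  have key : apery r s n ≡ 2 ^ (digitCount d m 1 % 6) [MOD 9] := by
    rw [hcount]
    exact (apery_modEq_two_pow_count_digits hr (Nat.dvd_of_mod_eq_zero hr3) hs
      (Nat.dvd_of_mod_eq_zero hs6) n).trans (two_pow_modEq_two_pow_mod_six _)
  have ht : digitCount d m 1 % 6 < 6 := Nat.mod_lt _ (by norm_num)
  simp only [Nat.ModEq] at key ⊢
  rw [key]
  interval_cases digitCount d m 1 % 6 <;> decide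

/-- Apéry numbers mod 9 for `r ≡ 0 (mod 3)`, `s ≡ 0 (mod 6)`. -/
theorem apery_mod_nine_r0_s0 (r s : ℕ) (hr : 0 < r) (hs : 0 < s) (hr3 : r % 3 = 0) (hs6 : s % 6 = 0)
    (n m : ℕ) (d : ℕ → ℕ) (hd2 : ∀ i, d i ≤ 2) (hd0 : ∀ i, m < i → d i = 0)
    (hn : n = ∑ i ∈ Finset.range (m + 1), d i * 3 ^ i) :
    (apery r s n ≡ 1 [MOD 9] ↔ digitCount d m 1 % 6 = 0) ∧
    (apery r s n ≡ 2 [MOD 9] ↔ digitCount d m 1 % 6 = 1) ∧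
    (apery r s n ≡ 4 [MOD 9] ↔ digitCount d m 1 % 6 = 2) ∧
    (apery r s n ≡ 8 [MOD 9] ↔ digitCount d m 1 % 6 = 3) ∧
    (apery r s n ≡ 7 [MOD 9] ↔ digitCount d m 1 % 6 = 4) ∧
    (apery r s n ≡ 5 [MOD 9] ↔ digitCount d m 1 % 6 = 5) ∧
    ¬ (apery r s n ≡ 3 [MOD 9]) ∧
    ¬ (apery r s n ≡ 6 [MOD 9]) :=
  apery_mod_nine_r0_s0_general r s hr hs hr3 hs6 n m d hd2 hn
end

section
/- Let r and s be positive integers with r \equiv 0 (mod 3) and s \equiv 4 (mod 6). For a nonnegative integer n, let t be the number of digits equal to 1 in the 3-adic expansion of n, let o_1 be the number of occurrences of the string 11 and o_2 the number of occurrences of the string 21. Then: a_n(r,s) \equiv 1 (mod 9) iff t is even and o_1 - o_2 \equiv 0 (mod 3); a_n(r,s) \equiv 4 (mod 9) iff t is even and o_1 - o_2 \equiv 1 (mod 3); a_n(r,s) \equiv 7 (mod 9) iff t is even and o_1 - o_2 \equiv 2 (mod 3); a_n(r,s) \equiv 8 (mod 9) iff t is odd and o_1 - o_2 \equiv 0 (mod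 3); a_n(r,s) \equiv 5 (mod 9) iff t is odd and o_1 - o_2 \equiv 1 (mod 3); a_n(r,s) \equiv 2 (mod 9) iff t is odd and o_1 - o_2 \equiv 2 (mod 3); and a_n(r,s) is never \equiv 3 or 6 (mod 9). -/
open Finset

/-!
Modulo 9, `C(3A, 3B) ≡ C(A, B)` (Pascal's rule three times; the middle terms are 3 times
multiples of 3 by Lucas), and the ratio identities between neighbouring binomial coefficients
turn this into `C(3A + u, 3B + v) ≡ C(A, B) · w` with explicit `w ≡ 1, 2 (mod 3)` for `v ≤ u`,
whereas `3 ∣ C(3A + u, 3B + v)` for `u < v`. Splitting `k = 3j + v` in `a_n(r, s)`, the powers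
`(1 + 3x)^r ≡ 1`, `(1 + 3x)^s ≡ 1 + 3x`, `(2 + 3x)^s ≡ 7 + 6x` give `a_{3q} ≡ a_{3q+2} ≡ a_q`
and `a_{3q+1} ≡ (8 + 6q) a_q`. Since `8 + 6q ≡ -1, -4, -7` as the last digit of `q` is
`0, 1, 2`, reading `n` digit by digit gives `a_n ≡ (-1)^t 4^{o₁} 7^{o₂}`, where `7 ≡ 4²` and
`4³ ≡ 1`.
-/

theorem Nat.choose_add_three_add_three (n k : ℕ) :
    (n + 3).choose (k + 3) =
      n.choose k + 3 * n.choose (k + 1) + 3 * n.choose (k + 2) + n.choose (k + 3) := by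
  simp only [Nat.choose_succ_succ]
  ring

theorem Nat.Prime.dvd_choose_mul_add_mul_add {p A B u v : ℕ} (hp : p.Prime) (hv : v < p)
    (huv : u < v) : p ∣ (p * A + u).choose (p * B + v) := by
  have := Fact.mk hp
  have h := Choose.choose_modEq_choose_mod_mul_choose_div_nat (p := p) (n := p * A + u)
    (k := p * B + v)
  simp only [Nat.mul_add_mod, Nat.mul_add_div hp.pos, Nat.mod_eq_of_lt (huv.trans hv),
    Nat.mod_eq_of_lt hv, Nat.choose_eq_zero_of_lt huv, zero_mul] at h
  exact Nat.modEq_zero_iff_dvd.mp h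

theorem Finset.sum_range_mul_eq_sum_sum_range {M : Type*} [AddCommMonoid M] (f : ℕ → M)
    (b q : ℕ) : ∑ k ∈ range (b * q), f k = ∑ j ∈ range q, ∑ v ∈ range b, f (b * j + v) := by
  induction q with
  | zero => simp
  | succ q ih => rw [Nat.mul_succ, sum_range_add, ih, sum_range_succ]

theorem Finset.sum_range_succ_mul_pow {R : Type*} [CommSemiring R] (d : ℕ → R) (b : R)
    (N : ℕ) :
    ∑ i ∈ range (N + 1), d i * b ^ i = b * ∑ i ∈ range N, d (i + 1) * b ^ i + d 0 := by
  rw [sum_range_succ', mul_sum]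
  simp only [pow_succ, pow_zero, mul_one]
  congr 1
  exact sum_congr rfl fun i _ => by ring

theorem three_mul_natCast_eq_zero_of_three_dvd {x : ℕ} (hx : 3 ∣ x) :
    (3 * x : ZMod 9) = 0 := by
  exact_mod_cast (ZMod.natCast_eq_zero_iff _ 9).mpr (Nat.mul_dvd_mul_left 3 hx)

theorem one_add_three_mul_pow_three (a : ZMod 9) : (1 + 3 * a) ^ 3 = 1 := by
  revert a
  decide

theorem one_add_three_mul_pow_of_mod_three_eq_zero {n : ℕ} (hn : n % 3 = 0) (a : ZMod 9) :
    (1 + 3 * a) ^ n = 1 := by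
  rw [pow_eq_pow_mod n (one_add_three_mul_pow_three a), hn, pow_zero]

theorem one_add_three_mul_pow_of_mod_three_eq_one {n : ℕ} (hn : n % 3 = 1) (a : ZMod 9) :
    (1 + 3 * a) ^ n = 1 + 3 * a := by
  rw [pow_eq_pow_mod n (one_add_three_mul_pow_three a), hn, pow_one]

theorem two_add_three_mul_pow_of_mod_six_eq_four {n : ℕ} (hn : n % 6 = 4) (a : ZMod 9) :
    (2 + 3 * a) ^ n = 7 + 6 * a := by
  rw [pow_eq_pow_mod n (show (2 + 3 * a) ^ 6 = 1 by revert a; decide), hn]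
  revert a
  decide

theorem natCast_choose_three_mul_three_mul (A B : ℕ) :
    ((3 * A).choose (3 * B) : ZMod 9) = A.choose B := by
  induction A generalizing B with
  | zero => rcases B with _ | B <;> simp [Nat.choose_eq_zero_of_lt]
  | succ A ih =>
    rcases B with _ | B
    · simp
    have hdvd {v : ℕ} (hv : 0 < v) (hv3 : v < 3) :
        (3 * (3 * A).choose (3 * B + v) : ZMod 9) = 0 :=
      three_mul_natCast_eq_zero_of_three_dvd
        (Nat.prime_three.dvd_choose_mul_add_mul_add (u := 0) hv3 hv)
    rw [mul_add_one, mul_add_one, Nat.choose_add_three_add_three, Nat.choose_succ_succ',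
      ← mul_add_one 3 B]
    push_cast
    rw [hdvd one_pos (by norm_num), hdvd two_pos (by norm_num), ih, ih]
    ring

theorem natCast_choose_three_mul_add_one_three_mul_add_one (A B : ℕ) :
    ((3 * A + 1).choose (3 * B + 1) : ZMod 9) = A.choose B * (1 + 3 * ((A : ZMod 9) - B)) := by
  have h := congrArg (Nat.cast : ℕ → ZMod 9) (Nat.add_one_mul_choose_eq (3 * A) (3 * B))
  push_cast at h
  rw [natCast_choose_three_mul_three_mul] at h
  linear_combination (norm := ring_nf) (3 * B - 1) * h
  reduce_mod_char

theorem natCast_choose_three_mul_add_one_three_mul (A B : ℕ) :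
    ((3 * A + 1).choose (3 * B) : ZMod 9) = A.choose B * (1 + 3 * B) := by
  rcases lt_or_ge A B with hAB | hBA
  · simp [Nat.choose_eq_zero_of_lt, hAB, (by omega : 3 * A + 1 < 3 * B)]
  have h := congrArg (Nat.cast : ℕ → ZMod 9) (Nat.choose_mul_succ_eq (3 * A) (3 * B))
  push_cast [show 3 * B ≤ 3 * A + 1 by omega] at h
  rw [natCast_choose_three_mul_three_mul] at h
  linear_combination (norm := ring_nf) (3 * A - 3 * B - 1) * h
  reduce_mod_char

theorem natCast_choose_three_mul_add_two_three_mul (A B : ℕ) :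
    ((3 * A + 2).choose (3 * B) : ZMod 9) = A.choose B := by
  rcases lt_or_ge A B with hAB | hBA
  · simp [Nat.choose_eq_zero_of_lt, hAB, (by omega : 3 * A + 2 < 3 * B)]
  have h := congrArg (Nat.cast : ℕ → ZMod 9) (Nat.choose_mul_succ_eq (3 * A + 1) (3 * B))
  push_cast [show 3 * B ≤ 3 * A + 1 + 1 by omega] at h
  rw [natCast_choose_three_mul_add_one_three_mul] at h
  linear_combination (norm := ring_nf) (3 * A - 3 * B - 5) * h
  reduce_mod_char

theorem natCast_choose_three_mul_add_two_three_mul_add_one (A B : ℕ) :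
    ((3 * A + 2).choose (3 * B + 1) : ZMod 9) = A.choose B * (2 + 3 * A) := by
  have h := congrArg (Nat.cast : ℕ → ZMod 9) (Nat.add_one_mul_choose_eq (3 * A + 1) (3 * B))
  push_cast at h
  rw [natCast_choose_three_mul_add_one_three_mul] at h
  linear_combination (norm := ring_nf) (3 * B - 1) * h
  reduce_mod_char

theorem natCast_choose_pow_eq_zero {A B u v e : ℕ} (hv : v < 3) (huv : u < v) (he : 2 ≤ e) :
    (((3 * A + u).choose (3 * B + v) : ℕ) : ZMod 9) ^ e = 0 := by
  rw [← Nat.cast_pow, ZMod.natCast_eq_zero_iff]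
  exact (pow_dvd_pow_of_dvd (Nat.prime_three.dvd_choose_mul_add_mul_add hv huv) 2).trans
    (pow_dvd_pow _ he)

def aperyTerm (r s n k : ℕ) : ℕ :=
  n.choose k ^ r * (n + k).choose k ^ s

theorem apery_three_mul_add {r s : ℕ} (hr : 0 < r) (q : ℕ) {u : ℕ} (hu : u < 3) :
    apery r s (3 * q + u) = ∑ j ∈ range (q + 1), (aperyTerm r s (3 * q + u) (3 * j) +
      aperyTerm r s (3 * q + u) (3 * j + 1) + aperyTerm r s (3 * q + u) (3 * j + 2)) := by
  have hext :
      apery r s (3 * q + u) = ∑ k ∈ range (3 * (q + 1)), aperyTerm r s (3 * q + u) k := by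
    refine sum_subset (range_subset_range.mpr (by omega)) fun k _ hk => ?_
    rw [Nat.choose_eq_zero_of_lt (by simpa using hk), zero_pow hr.ne', zero_mul]
  simp [hext, sum_range_mul_eq_sum_sum_range, sum_range_succ, add_assoc]

theorem natCast_apery_three_mul {r : ℕ} (s : ℕ) (hr : 2 ≤ r) (q : ℕ) :
    (apery r s (3 * q) : ZMod 9) = apery r s q := by
  rw [← add_zero (3 * q), apery_three_mul_add (by omega) q (by norm_num), apery]
  push_cast
  refine sum_congr rfl fun j _ => ?_
  simp only [aperyTerm, Nat.cast_mul, Nat.cast_pow]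
  rw [natCast_choose_pow_eq_zero (by norm_num) (by norm_num) hr,
    natCast_choose_pow_eq_zero (by norm_num) (by norm_num) hr,
    show 3 * q + 0 + 3 * j = 3 * (q + j) by ring,
    add_zero, natCast_choose_three_mul_three_mul, natCast_choose_three_mul_three_mul]
  ring

theorem natCast_apery_three_mul_add_one {r s : ℕ} (hr : 0 < r) (hr3 : r % 3 = 0) (hs6 : s % 6 = 4)
    (q : ℕ) : (apery r s (3 * q + 1) : ZMod 9) = (8 + 6 * q) * apery r s q := by
  rw [apery_three_mul_add hr q (by norm_num), apery, Nat.cast_sum, Nat.cast_sum, mul_sum]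
  refine sum_congr rfl fun j _ => ?_
  simp only [aperyTerm, Nat.cast_add, Nat.cast_mul, Nat.cast_pow]
  rw [natCast_choose_pow_eq_zero (u := 1) (v := 2) (by norm_num) (by norm_num) (by omega),
    show 3 * q + 1 + 3 * j = 3 * (q + j) + 1 by ring,
    show 3 * q + 1 + (3 * j + 1) = 3 * (q + j) + 2 by ring,
    natCast_choose_three_mul_add_one_three_mul, natCast_choose_three_mul_add_one_three_mul,
    natCast_choose_three_mul_add_one_three_mul_add_one,
    natCast_choose_three_mul_add_two_three_mul_add_one]
  simp only [mul_pow, one_add_three_mul_pow_of_mod_three_eq_zero hr3,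
    one_add_three_mul_pow_of_mod_three_eq_one (show s % 3 = 1 by omega),
    two_add_three_mul_pow_of_mod_six_eq_four hs6]
  push_cast
  ring_nf
  reduce_mod_char

theorem natCast_apery_three_mul_add_two {r s : ℕ} (hr : 0 < r) (hs : 2 ≤ s) (q : ℕ) :
    (apery r s (3 * q + 2) : ZMod 9) = apery r s q := by
  rw [apery_three_mul_add hr q (by norm_num), apery]
  push_cast
  refine sum_congr rfl fun j _ => ?_
  simp only [aperyTerm, Nat.cast_mul, Nat.cast_pow]
  rw [show 3 * q + 2 + 3 * j = 3 * (q + j) + 2 by ring,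
    show 3 * q + 2 + (3 * j + 1) = 3 * (q + j + 1) + 0 by ring,
    show 3 * q + 2 + (3 * j + 2) = 3 * (q + j + 1) + 1 by ring,
    natCast_choose_pow_eq_zero (by norm_num) (by norm_num) hs,
    natCast_choose_pow_eq_zero (by norm_num) (by norm_num) hs,
    natCast_choose_three_mul_add_two_three_mul, natCast_choose_three_mul_add_two_three_mul]
  ring

def aperyFactor (q u : ℕ) : ZMod 9 :=
  if u = 1 then 8 + 6 * q else 1

theorem natCast_apery_three_mul_add {r s : ℕ} (hr : 0 < r) (hr3 : r % 3 = 0) (hs6 : s % 6 = 4)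
    (q : ℕ) {u : ℕ} (hu : u ≤ 2) :
    (apery r s (3 * q + u) : ZMod 9) = aperyFactor q u * apery r s q := by
  interval_cases u
  · simp [aperyFactor, natCast_apery_three_mul s (by omega : 2 ≤ r)]
  · simp [aperyFactor, natCast_apery_three_mul_add_one hr hr3 hs6]
  · simp [aperyFactor, natCast_apery_three_mul_add_two hr (by omega : 2 ≤ s)]

theorem aperyFactor_three_mul_add (c b u : ℕ) : aperyFactor (3 * c + b) u = aperyFactor b u := by
  unfold aperyFactor
  split_ifs
  · push_cast
    ring_nf
    reduce_mod_char
  · rfl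

theorem natCast_apery_digits {r s : ℕ} (hr : 0 < r) (hr3 : r % 3 = 0) (hs6 : s % 6 = 4) (m : ℕ)
    (d : ℕ → ℕ) (hd2 : ∀ i, d i ≤ 2) (hd0 : ∀ i, m < i → d i = 0) :
    (apery r s (∑ i ∈ range (m + 1), d i * 3 ^ i) : ZMod 9) =
      ∏ i ∈ range (m + 1), aperyFactor (d (i + 1)) (d i) := by
  induction m generalizing d with
  | zero =>
    simpa [hd0 1 one_pos, apery] using natCast_apery_three_mul_add hr hr3 hs6 0 (hd2 0)
  | succ m ih =>
    rw [sum_range_succ_mul_pow, natCast_apery_three_mul_add hr hr3 hs6 _ (hd2 0),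
      ih (fun i => d (i + 1)) (fun i => hd2 _) (fun i hi => hd0 _ (by omega)),
      prod_range_succ' _ (m + 1), sum_range_succ_mul_pow, aperyFactor_three_mul_add, mul_comm]

theorem aperyFactor_eq_pow {b : ℕ} (hb : b ≤ 2) (a : ℕ) :
    aperyFactor b a = (-1) ^ (if a = 1 then 1 else 0) * 4 ^ (if b = 1 ∧ a = 1 then 1 else 0) *
      7 ^ (if b = 2 ∧ a = 1 then 1 else 0) := by
  unfold aperyFactor
  by_cases ha : a = 1 <;> interval_cases b <;> simp [ha] <;> decide

theorem occ_eq_sum_range (d : ℕ → ℕ) (m a b : ℕ) :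
    occ d m a b = ∑ i ∈ range (m + 1), if d (i + 1) = a ∧ d i = b then 1 else 0 := by
  rw [occ, card_filter, ← Finset.Ico_add_one_right_eq_Icc, sum_Ico_eq_sum_range]
  simp [add_comm]

theorem prod_aperyFactor_eq {d : ℕ → ℕ} (hd2 : ∀ i, d i ≤ 2) (m : ℕ) :
    ∏ i ∈ range (m + 1), aperyFactor (d (i + 1)) (d i) =
      (-1) ^ digitCount d m 1 * 4 ^ occ d m 1 1 * 7 ^ occ d m 2 1 := by
  simp only [aperyFactor_eq_pow (hd2 _), prod_mul_distrib, prod_pow_eq_pow_sum, digitCount,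
    card_filter, occ_eq_sum_range]

theorem modEq_nine_iff_of_natCast_eq {x t o₁ o₂ : ℕ}
    (hx : (x : ZMod 9) = (-1) ^ t * 4 ^ o₁ * 7 ^ o₂) :
    (x ≡ 1 [MOD 9] ↔ Even t ∧ ((o₁ : ℤ) - (o₂ : ℤ)) % 3 = 0) ∧
    (x ≡ 4 [MOD 9] ↔ Even t ∧ ((o₁ : ℤ) - (o₂ : ℤ)) % 3 = 1) ∧
    (x ≡ 7 [MOD 9] ↔ Even t ∧ ((o₁ : ℤ) - (o₂ : ℤ)) % 3 = 2) ∧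
    (x ≡ 8 [MOD 9] ↔ Odd t ∧ ((o₁ : ℤ) - (o₂ : ℤ)) % 3 = 0) ∧
    (x ≡ 5 [MOD 9] ↔ Odd t ∧ ((o₁ : ℤ) - (o₂ : ℤ)) % 3 = 1) ∧
    (x ≡ 2 [MOD 9] ↔ Odd t ∧ ((o₁ : ℤ) - (o₂ : ℤ)) % 3 = 2) ∧
    ¬ (x ≡ 3 [MOD 9]) ∧
    ¬ (x ≡ 6 [MOD 9]) := by
  have h47 : (4 : ZMod 9) ^ o₁ * 7 ^ o₂ = 4 ^ ((o₁ + 2 * o₂) % 3) := by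
    rw [show (7 : ZMod 9) = 4 ^ 2 by decide, ← pow_mul, ← pow_add,
      ← pow_eq_pow_mod _ (by decide : (4 : ZMod 9) ^ 3 = 1)]
  rw [mul_assoc, h47, neg_one_pow_eq_pow_mod_two] at hx
  have hdiff : ((o₁ : ℤ) - o₂) % 3 = ((o₁ + 2 * o₂) % 3 : ℕ) := by omega
  simp only [← ZMod.natCast_eq_natCast_iff, hx, Nat.even_iff, Nat.odd_iff, hdiff]
  have ht := Nat.mod_lt t two_pos
  have ho := Nat.mod_lt (o₁ + 2 * o₂) three_pos
  generalize t % 2 = e at *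
  generalize (o₁ + 2 * o₂) % 3 = f at *
  interval_cases e <;> interval_cases f <;> decide

theorem apery_mod_nine_r0_s4_general (r s : ℕ) (hr : 0 < r)
    (hr3 : r % 3 = 0) (hs6 : s % 6 = 4)
    (n m : ℕ) (d : ℕ → ℕ) (hd2 : ∀ i, d i ≤ 2) (hd0 : ∀ i, m < i → d i = 0)
    (hn : n = ∑ i ∈ Finset.range (m + 1), d i * 3 ^ i) :
    (apery r s n ≡ 1 [MOD 9] ↔ Even (digitCount d m 1) ∧
      ((occ d m 1 1 : ℤ) - (occ d m 2 1 : ℤ)) % 3 = 0) ∧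
    (apery r s n ≡ 4 [MOD 9] ↔ Even (digitCount d m 1) ∧
      ((occ d m 1 1 : ℤ) - (occ d m 2 1 : ℤ)) % 3 = 1) ∧
    (apery r s n ≡ 7 [MOD 9] ↔ Even (digitCount d m 1) ∧
      ((occ d m 1 1 : ℤ) - (occ d m 2 1 : ℤ)) % 3 = 2) ∧
    (apery r s n ≡ 8 [MOD 9] ↔ Odd (digitCount d m 1) ∧
      ((occ d m 1 1 : ℤ) - (occ d m 2 1 : ℤ)) % 3 = 0) ∧
    (apery r s n ≡ 5 [MOD 9] ↔ Odd (digitCount d m 1) ∧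
      ((occ d m 1 1 : ℤ) - (occ d m 2 1 : ℤ)) % 3 = 1) ∧
    (apery r s n ≡ 2 [MOD 9] ↔ Odd (digitCount d m 1) ∧
      ((occ d m 1 1 : ℤ) - (occ d m 2 1 : ℤ)) % 3 = 2) ∧
    ¬ (apery r s n ≡ 3 [MOD 9]) ∧
    ¬ (apery r s n ≡ 6 [MOD 9]) := by
  subst hn
  exact modEq_nine_iff_of_natCast_eq
    ((natCast_apery_digits hr hr3 hs6 m d hd2 hd0).trans (prod_aperyFactor_eq hd2 m))

/-- Apéry numbers mod 9 for `r ≡ 0 (mod 3)`, `s ≡ 4 (mod 6)`. -/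
theorem apery_mod_nine_r0_s4 (r s : ℕ) (hr : 0 < r) (hs : 0 < s)
    (hr3 : r % 3 = 0) (hs6 : s % 6 = 4)
    (n m : ℕ) (d : ℕ → ℕ) (hd2 : ∀ i, d i ≤ 2) (hd0 : ∀ i, m < i → d i = 0)
    (hn : n = ∑ i ∈ Finset.range (m + 1), d i * 3 ^ i) :
    (apery r s n ≡ 1 [MOD 9] ↔ Even (digitCount d m 1) ∧
      ((occ d m 1 1 : ℤ) - (occ d m 2 1 : ℤ)) % 3 = 0) ∧
    (apery r s n ≡ 4 [MOD 9] ↔ Even (digitCount d m 1) ∧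
      ((occ d m 1 1 : ℤ) - (occ d m 2 1 : ℤ)) % 3 = 1) ∧
    (apery r s n ≡ 7 [MOD 9] ↔ Even (digitCount d m 1) ∧
      ((occ d m 1 1 : ℤ) - (occ d m 2 1 : ℤ)) % 3 = 2) ∧
    (apery r s n ≡ 8 [MOD 9] ↔ Odd (digitCount d m 1) ∧
      ((occ d m 1 1 : ℤ) - (occ d m 2 1 : ℤ)) % 3 = 0) ∧
    (apery r s n ≡ 5 [MOD 9] ↔ Odd (digitCount d m 1) ∧
      ((occ d m 1 1 : ℤ) - (occ d m 2 1 : ℤ)) % 3 = 1) ∧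
    (apery r s n ≡ 2 [MOD 9] ↔ Odd (digitCount d m 1) ∧
      ((occ d m 1 1 : ℤ) - (occ d m 2 1 : ℤ)) % 3 = 2) ∧
    ¬ (apery r s n ≡ 3 [MOD 9]) ∧
    ¬ (apery r s n ≡ 6 [MOD 9]) :=
  apery_mod_nine_r0_s4_general r s hr hr3 hs6 n m d hd2 hd0 hn
end
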